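/- arXiv:2312.15857 — 2 statements merged into one kernel-verified Lean document; each statement's English description precedes it below -/
import Mathlib

section
/- Let X, Y, Z be i.i.d. real random variables with mean 0, positive variance, and finite fourth moment. Then Corr(|X−Y|², |X−Z|²) = (E|X|⁴ − (E|X|²)²) / (2(E|X|⁴ + (E|X|²)²)). -/
open MeasureTheory ProbabilityTheory

/-- Covariance of two real random variables. -/
noncomputable def cov {Ω : Type*} [MeasurableSpace Ω] (f g : Ω → ℝ) (μ : Measure Ω) : ℝ :=
  ∫ ω, (f ω - ∫ ω', f ω' ∂μ) * (g ω - ∫ ω', g ω' ∂μ) ∂μ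

/-- Pearson correlation coefficient of two real random variables. -/
noncomputable def corr {Ω : Type*} [MeasurableSpace Ω] (f g : Ω → ℝ) (μ : Measure Ω) : ℝ :=
  cov f g μ / (Real.sqrt (variance f μ) * Real.sqrt (variance g μ))

/-!
Put `U = (X - Y)²`, `V = (X - Z)²`, `m₂ = E X²`, `m₄ = E X⁴`. Every moment involved has the form
`E[W (A - C)ⁿ]` with the pair `(W, A)` independent of `C`, and the binomial theorem factorises it
into products of moments. Since `Z` is centred and independent of `(X, Y)`, only the `Z`-free and
the `Z²` terms survive in `E[U V] = E[U X²] + E[U] E[Z²]`, which gives `Cov(U, V) = m₄ - m₂²`;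
the fourth moment of `X - Y` gives `Var U = Var V = 2 (m₄ + m₂²)`.
-/

open Finset
open scoped ENNReal

namespace MeasureTheory.MemLp

variable {Ω : Type*} [MeasurableSpace Ω] {μ : Measure Ω} [IsFiniteMeasure μ] {X : Ω → ℝ}

lemma pow {p : ℝ≥0∞} {k : ℕ} (hX : MemLp X (k * p) μ) : MemLp (fun ω ↦ X ω ^ k) p μ := by
  rcases eq_or_ne k 0 with rfl | hk
  · simpa using memLp_const (1 : ℝ)
  · have h := hX.norm_rpow_div k
    rw [mul_comm, ENNReal.mul_div_cancel_right (by exact_mod_cast hk) (by simp)] at h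
    refine (memLp_norm_iff (hX.1.pow k)).1 ?_
    simpa [norm_pow] using h

lemma integrable_pow {n k : ℕ} (hX : MemLp X n μ) (hk : k ≤ n) :
    Integrable (fun ω ↦ X ω ^ k) μ :=
  memLp_one_iff_integrable.1 <| MemLp.pow <| by
    simpa using hX.mono_exponent (by exact_mod_cast hk)

end MeasureTheory.MemLp

namespace ProbabilityTheory

variable {Ω : Type*} [MeasurableSpace Ω] {μ : Measure Ω}

lemma IndepFun.integral_mul_sub_pow [IsFiniteMeasure μ] {W A Z : Ω → ℝ}
    (h : IndepFun (fun ω ↦ (W ω, A ω)) Z μ) {n : ℕ} (hZ : MemLp Z n μ)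
    (hWA : ∀ k ≤ n, Integrable (fun ω ↦ W ω * A ω ^ k) μ) :
    ∫ ω, W ω * (A ω - Z ω) ^ n ∂μ = ∑ k ∈ range (n + 1),
      (-1) ^ k * n.choose k * (∫ ω, W ω * A ω ^ (n - k) ∂μ) * ∫ ω, Z ω ^ k ∂μ := by
  have expand : ∀ ω, W ω * (A ω - Z ω) ^ n = ∑ k ∈ range (n + 1),
      (-1) ^ k * n.choose k * (W ω * A ω ^ (n - k)) * Z ω ^ k := fun ω ↦ by
    rw [sub_eq_neg_add, add_pow, mul_sum]
    exact sum_congr rfl fun k _ ↦ by rw [neg_pow]; ring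
  have hindep : ∀ k ∈ range (n + 1), IndepFun
      (fun ω ↦ (-1) ^ k * n.choose k * (W ω * A ω ^ (n - k))) (fun ω ↦ Z ω ^ k) μ := fun k _ ↦
    h.comp (φ := fun p : ℝ × ℝ ↦ (-1) ^ k * n.choose k * (p.1 * p.2 ^ (n - k)))
      (ψ := fun z : ℝ ↦ z ^ k) (by fun_prop) (by fun_prop)
  have hcoeff : ∀ k ∈ range (n + 1),
      Integrable (fun ω ↦ (-1) ^ k * n.choose k * (W ω * A ω ^ (n - k))) μ :=
    fun k _ ↦ (hWA _ (n.sub_le k)).const_mul _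
  have hpow : ∀ k ∈ range (n + 1), Integrable (fun ω ↦ Z ω ^ k) μ :=
    fun k hk ↦ hZ.integrable_pow (Nat.lt_succ_iff.1 (mem_range.1 hk))
  simp_rw [expand]
  rw [integral_finsetSum _ fun k hk ↦ by exact (hindep k hk).integrable_mul (hcoeff k hk) (hpow k hk)]
  refine sum_congr rfl fun k hk ↦ ?_
  rw [(hindep k hk).integral_fun_mul_eq_mul_integral (hcoeff k hk).1 (hpow k hk).1,
    integral_const_mul]

variable [IsProbabilityMeasure μ]

lemma IndepFun.integral_mul_sub_sq {W A Z : Ω → ℝ}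
    (h : IndepFun (fun ω ↦ (W ω, A ω)) Z μ) (hZ : MemLp Z 2 μ) (hZ0 : ∫ ω, Z ω ∂μ = 0)
    (hWA : ∀ k ≤ 2, Integrable (fun ω ↦ W ω * A ω ^ k) μ) :
    ∫ ω, W ω * (A ω - Z ω) ^ 2 ∂μ
      = ∫ ω, W ω * A ω ^ 2 ∂μ + (∫ ω, W ω ∂μ) * ∫ ω, Z ω ^ 2 ∂μ := by
  rw [h.integral_mul_sub_pow (by simpa using hZ) hWA]
  simp [sum_range_succ, hZ0]

lemma IndepFun.integral_sub_sq {A B : Ω → ℝ} (h : IndepFun A B μ)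
    (hA : MemLp A 2 μ) (hB : MemLp B 2 μ) (hB0 : ∫ ω, B ω ∂μ = 0) :
    ∫ ω, (A ω - B ω) ^ 2 ∂μ = ∫ ω, A ω ^ 2 ∂μ + ∫ ω, B ω ^ 2 ∂μ := by
  have h1 : IndepFun (fun ω ↦ ((1 : ℝ), A ω)) B μ :=
    h.comp (measurable_const.prodMk measurable_id) measurable_id
  simpa using h1.integral_mul_sub_sq hB hB0
    fun k hk ↦ by simpa using hA.integrable_pow (n := 2) (by simpa using hk)

lemma IndepFun.integral_sub_pow_four {A B : Ω → ℝ} (h : IndepFun A B μ)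
    (hA : MemLp A 4 μ) (hB : MemLp B 4 μ) (hA0 : ∫ ω, A ω ∂μ = 0) (hB0 : ∫ ω, B ω ∂μ = 0) :
    ∫ ω, (A ω - B ω) ^ 4 ∂μ
      = ∫ ω, A ω ^ 4 ∂μ + 6 * (∫ ω, A ω ^ 2 ∂μ) * (∫ ω, B ω ^ 2 ∂μ) + ∫ ω, B ω ^ 4 ∂μ := by
  have h1 : IndepFun (fun ω ↦ ((1 : ℝ), A ω)) B μ :=
    h.comp (measurable_const.prodMk measurable_id) measurable_id
  have expand := h1.integral_mul_sub_pow (n := 4) (by simpa using hB)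
    fun k hk ↦ by simpa using hA.integrable_pow (n := 4) (by simpa using hk)
  norm_num [sum_range_succ, Nat.choose, hA0, hB0] at expand
  linarith

lemma IndepFun.variance_sub_sq {A B : Ω → ℝ} (h : IndepFun A B μ)
    (hA : MemLp A 4 μ) (hB : MemLp B 4 μ) (hA0 : ∫ ω, A ω ∂μ = 0) (hB0 : ∫ ω, B ω ∂μ = 0) :
    variance (fun ω ↦ (A ω - B ω) ^ 2) μ
      = (∫ ω, A ω ^ 4 ∂μ - (∫ ω, A ω ^ 2 ∂μ) ^ 2) + (∫ ω, B ω ^ 4 ∂μ - (∫ ω, B ω ^ 2 ∂μ) ^ 2)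
        + 4 * (∫ ω, A ω ^ 2 ∂μ) * ∫ ω, B ω ^ 2 ∂μ := by
  have hU : MemLp (fun ω ↦ (A ω - B ω) ^ 2) 2 μ := MemLp.pow (by norm_num; exact hA.sub hB)
  rw [variance_eq_sub hU]
  simp only [Pi.pow_apply, ← pow_mul]
  rw [h.integral_sub_pow_four hA hB hA0 hB0,
    h.integral_sub_sq (hA.mono_exponent (by norm_num)) (hB.mono_exponent (by norm_num)) hB0]
  ring

lemma covariance_sub_sq_sub_sq {A B C : Ω → ℝ} (hAB : IndepFun A B μ)
    (hABC : IndepFun (fun ω ↦ (A ω, B ω)) C μ) (hA : MemLp A 4 μ) (hB : MemLp B 4 μ)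
    (hC : MemLp C 4 μ) (hB0 : ∫ ω, B ω ∂μ = 0) (hC0 : ∫ ω, C ω ∂μ = 0) :
    covariance (fun ω ↦ (A ω - B ω) ^ 2) (fun ω ↦ (A ω - C ω) ^ 2) μ
      = ∫ ω, A ω ^ 4 ∂μ - (∫ ω, A ω ^ 2 ∂μ) ^ 2 := by
  have hU : MemLp (fun ω ↦ (A ω - B ω) ^ 2) 2 μ := MemLp.pow (by norm_num; exact hA.sub hB)
  have hV : MemLp (fun ω ↦ (A ω - C ω) ^ 2) 2 μ := MemLp.pow (by norm_num; exact hA.sub hC)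
  have hA2 : MemLp A 2 μ := hA.mono_exponent (by norm_num)
  have hApow : ∀ k ≤ 2, MemLp (fun ω ↦ A ω ^ k) 2 μ := fun k hk ↦
    MemLp.pow (hA.mono_exponent (by norm_cast; omega))
  have hUA : IndepFun (fun ω ↦ ((A ω - B ω) ^ 2, A ω)) C μ :=
    hABC.comp (φ := fun p : ℝ × ℝ ↦ ((p.1 - p.2) ^ 2, p.1)) (by fun_prop) measurable_id
  have hAAB : IndepFun (fun ω ↦ (A ω ^ 2, A ω)) B μ :=
    hAB.comp (φ := fun a : ℝ ↦ (a ^ 2, a)) (by fun_prop) measurable_id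
  have hAC : IndepFun A C μ := hABC.comp measurable_fst measurable_id
  have hUA2 : ∫ ω, (A ω - B ω) ^ 2 * A ω ^ 2 ∂μ
      = ∫ ω, A ω ^ 4 ∂μ + (∫ ω, A ω ^ 2 ∂μ) * ∫ ω, B ω ^ 2 ∂μ := by
    simp_rw [mul_comm _ (A _ ^ 2)]
    rw [hAAB.integral_mul_sub_sq (hB.mono_exponent (by norm_num)) hB0 fun k hk ↦ by
      simpa [← pow_add] using hA.integrable_pow (n := 4) (by omega)]
    simp only [← pow_add]
  rw [covariance_eq_sub hU hV]
  simp only [Pi.mul_apply]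
  rw [hUA.integral_mul_sub_sq (hC.mono_exponent (by norm_num)) hC0
      fun k hk ↦ hU.integrable_mul (hApow k hk),
    hUA2, hAB.integral_sub_sq hA2 (hB.mono_exponent (by norm_num)) hB0,
    hAC.integral_sub_sq hA2 (hC.mono_exponent (by norm_num)) hC0]
  ring

end ProbabilityTheory

theorem stmt2_general {Ω : Type*} [MeasurableSpace Ω] (μ : Measure Ω) [IsProbabilityMeasure μ]
    (X Y Z : Ω → ℝ)
    (hindep : iIndepFun ![X, Y, Z] μ)
    (hXY : IdentDistrib X Y μ μ) (hXZ : IdentDistrib X Z μ μ)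
    (hmean : ∫ ω, X ω ∂μ = 0) (hmom : MemLp X 4 μ) :
    corr (fun ω => |X ω - Y ω| ^ 2) (fun ω => |X ω - Z ω| ^ 2) μ
      = (∫ ω, |X ω| ^ 4 ∂μ - (∫ ω, |X ω| ^ 2 ∂μ) ^ 2)
          / (2 * (∫ ω, |X ω| ^ 4 ∂μ + (∫ ω, |X ω| ^ 2 ∂μ) ^ 2)) := by
  have hmoment {W : Ω → ℝ} (h : IdentDistrib X W μ μ) (k : ℕ) :
      ∫ ω, W ω ^ k ∂μ = ∫ ω, X ω ^ k ∂μ :=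
    (h.comp (measurable_id.pow_const k)).integral_eq.symm
  have hcentred {W : Ω → ℝ} (h : IdentDistrib X W μ μ) : ∫ ω, W ω ∂μ = 0 := by
    simpa [hmean] using hmoment h 1
  have hvar {W : Ω → ℝ} (h : IdentDistrib X W μ μ) (hXW : IndepFun X W μ) :
      variance (fun ω ↦ (X ω - W ω) ^ 2) μ = 2 * (∫ ω, X ω ^ 4 ∂μ + (∫ ω, X ω ^ 2 ∂μ) ^ 2) := by
    rw [hXW.variance_sub_sq hmom (h.memLp_snd hmom) hmean (hcentred h), hmoment h, hmoment h]
    ring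
  have hIXY : IndepFun X Y μ := by simpa using hindep.indepFun (i := 0) (j := 1) (by decide)
  have hIXZ : IndepFun X Z μ := by simpa using hindep.indepFun (i := 0) (j := 2) (by decide)
  have hIXYZ : IndepFun (fun ω ↦ (X ω, Y ω)) Z μ := by
    have hmeas : ∀ i, AEMeasurable (![X, Y, Z] i) μ := fun i ↦ by
      fin_cases i
      exacts [hmom.aemeasurable, (hXY.memLp_snd hmom).aemeasurable,
        (hXZ.memLp_snd hmom).aemeasurable]
    simpa using hindep.indepFun_prodMk₀ hmeas 0 1 2 (by decide) (by decide)
  have hcov : cov (fun ω ↦ (X ω - Y ω) ^ 2) (fun ω ↦ (X ω - Z ω) ^ 2) μ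
      = ∫ ω, X ω ^ 4 ∂μ - (∫ ω, X ω ^ 2 ∂μ) ^ 2 :=
    covariance_sub_sq_sub_sq hIXY hIXYZ hmom (hXY.memLp_snd hmom) (hXZ.memLp_snd hmom)
      (hcentred hXY) (hcentred hXZ)
  simp only [sq_abs, (Even.pow_abs ⟨2, rfl⟩ : ∀ x : ℝ, |x| ^ 4 = x ^ 4)]
  rw [corr, hcov, hvar hXY hIXY, hvar hXZ hIXZ, Real.mul_self_sqrt (by positivity)]

theorem stmt2 {Ω : Type*} [MeasurableSpace Ω] (μ : Measure Ω) [IsProbabilityMeasure μ]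
    (X Y Z : Ω → ℝ) (hX : Measurable X) (hY : Measurable Y) (hZ : Measurable Z)
    (hindep : iIndepFun ![X, Y, Z] μ)
    (hXY : IdentDistrib X Y μ μ) (hXZ : IdentDistrib X Z μ μ)
    (hmean : ∫ ω, X ω ∂μ = 0) (hvar : 0 < variance X μ) (hmom : MemLp X 4 μ) :
    corr (fun ω => |X ω - Y ω| ^ 2) (fun ω => |X ω - Z ω| ^ 2) μ
      = (∫ ω, |X ω| ^ 4 ∂μ - (∫ ω, |X ω| ^ 2 ∂μ) ^ 2)
          / (2 * (∫ ω, |X ω| ^ 4 ∂μ + (∫ ω, |X ω| ^ 2 ∂μ) ^ 2)) :=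
  stmt2_general μ X Y Z hindep hXY hXZ hmean hmom
end

section
/- Let X be a real random variable with E exp(t₀|X|^{2α}) < ∞ for some α ∈ (0, 1/2] and t₀ > 0, and let X', X'' be independent copies of X. Then there exists t₁ > 0 such that E exp(t₁·||X−X'|² − E|X−X'|²|^α) < ∞. -/
/-!
Since `t ↦ t ^ α` is subadditive on `[0, ∞)` for `α ≤ 1`,
`||x - y|² - m|^α ≤ (|x - y|² + m)^α ≤ |x|^{2α} + |y|^{2α} + m^α` once `2α ≤ 1`.
Hence `exp (t₀ ||X - X'|² - m|^α)` is dominated by `exp (t₀ m^α)` times the product of the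
independent integrable variables `exp (t₀ |X|^{2α})` and `exp (t₀ |X'|^{2α})`.
-/

open MeasureTheory ProbabilityTheory Real

lemma Real.abs_sub_rpow_le {x y p : ℝ} (hp : 0 ≤ p) (hp1 : p ≤ 1) :
    |x - y| ^ p ≤ |x| ^ p + |y| ^ p :=
  (rpow_le_rpow (abs_nonneg _) (abs_sub _ _) hp).trans
    (rpow_add_le_add_rpow (abs_nonneg _) (abs_nonneg _) hp hp1)

lemma Real.abs_sq_abs_sub_sub_rpow_le {x y m α : ℝ} (hm : 0 ≤ m) (hα : 0 ≤ α)
    (hα1 : α ≤ 1 / 2) :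
    |(|x - y| ^ 2 - m)| ^ α ≤ |x| ^ (2 * α) + |y| ^ (2 * α) + m ^ α := by
  have hsq : (|x - y| ^ 2) ^ α = |x - y| ^ (2 * α) := by
    rw [← rpow_natCast, ← rpow_mul (abs_nonneg _), Nat.cast_ofNat]
  calc |(|x - y| ^ 2 - m)| ^ α
      ≤ (|x - y| ^ 2 + m) ^ α := by
        refine rpow_le_rpow (abs_nonneg _) ?_ hα
        exact (abs_sub _ _).trans_eq (by rw [abs_of_nonneg (by positivity), abs_of_nonneg hm])
    _ ≤ (|x - y| ^ 2) ^ α + m ^ α := rpow_add_le_add_rpow (by positivity) hm hα (by linarith)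
    _ ≤ |x| ^ (2 * α) + |y| ^ (2 * α) + m ^ α := by
        rw [hsq]
        gcongr
        exact abs_sub_rpow_le (by positivity) (by linarith)

lemma ProbabilityTheory.IndepFun.integrable_exp_add {Ω β γ : Type*} {_ : MeasurableSpace Ω}
    {_ : MeasurableSpace β} {_ : MeasurableSpace γ} {μ : Measure Ω} {X : Ω → β} {Y : Ω → γ}
    (hXY : IndepFun X Y μ) {f : β → ℝ} {g : γ → ℝ} (hf : Measurable f) (hg : Measurable g)
    (hfX : Integrable (fun ω => exp (f (X ω))) μ) (hgY : Integrable (fun ω => exp (g (Y ω))) μ) :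
    Integrable (fun ω => exp (f (X ω) + g (Y ω))) μ := by
  simp_rw [exp_add]
  exact (hXY.comp (measurable_exp.comp hf) (measurable_exp.comp hg)).integrable_mul hfX hgY

theorem stmt9_general {Ω : Type*} [MeasurableSpace Ω] (μ : Measure Ω)
    (X X' X'' : Ω → ℝ)
    (hindep : iIndepFun ![X, X', X''] μ)
    (hid' : IdentDistrib X X' μ μ)
    (α t₀ : ℝ) (hα : α ∈ Set.Ioc (0 : ℝ) (1 / 2)) (ht₀ : 0 < t₀)
    (hexp : Integrable (fun ω => Real.exp (t₀ * |X ω| ^ (2 * α))) μ) :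
    ∃ t₁ > 0, Integrable
      (fun ω => Real.exp (t₁ *
        |(|X ω - X' ω| ^ 2 - ∫ ω', |X ω' - X' ω'| ^ 2 ∂μ)| ^ α)) μ := by
  obtain ⟨hα0, hα1⟩ := hα
  refine ⟨t₀, ht₀, ?_⟩
  set m := ∫ ω', |X ω' - X' ω'| ^ 2 ∂μ
  have hm : 0 ≤ m := integral_nonneg fun _ => by positivity
  have hφ : Measurable fun x : ℝ => t₀ * |x| ^ (2 * α) := by fun_prop
  have hexp' : Integrable (fun ω => exp (t₀ * |X' ω| ^ (2 * α))) μ :=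
    (hid'.comp (measurable_exp.comp hφ)).integrable_iff.1 hexp
  have hXX' : IndepFun X X' μ := hindep.indepFun (i := 0) (j := 1) (by decide)
  have hdom := (hXX'.integrable_exp_add hφ hφ hexp hexp').const_mul (exp (t₀ * m ^ α))
  have hmeas : AEStronglyMeasurable
      (fun ω => exp (t₀ * |(|X ω - X' ω| ^ 2 - m)| ^ α)) μ :=
    (Measurable.comp_aemeasurable (g := fun z => exp (t₀ * |(|z| ^ 2 - m)| ^ α))
      (by fun_prop) (hid'.aemeasurable_fst.sub hid'.aemeasurable_snd)).aestronglyMeasurable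
  refine hdom.mono' hmeas (ae_of_all _ fun ω => ?_)
  rw [norm_of_nonneg (exp_pos _).le, ← exp_add, exp_le_exp]
  have key := abs_sq_abs_sub_sub_rpow_le (x := X ω) (y := X' ω) hm hα0.le hα1
  linarith [mul_le_mul_of_nonneg_left key ht₀.le]

theorem stmt9 {Ω : Type*} [MeasurableSpace Ω] (μ : Measure Ω) [IsProbabilityMeasure μ]
    (X X' X'' : Ω → ℝ) (hX : Measurable X) (hX' : Measurable X') (hX'' : Measurable X'')
    (hindep : iIndepFun ![X, X', X''] μ)
    (hid' : IdentDistrib X X' μ μ) (hid'' : IdentDistrib X X'' μ μ)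
    (α t₀ : ℝ) (hα : α ∈ Set.Ioc (0 : ℝ) (1 / 2)) (ht₀ : 0 < t₀)
    (hexp : Integrable (fun ω => Real.exp (t₀ * |X ω| ^ (2 * α))) μ) :
    ∃ t₁ > 0, Integrable
      (fun ω => Real.exp (t₁ *
        |(|X ω - X' ω| ^ 2 - ∫ ω', |X ω' - X' ω'| ^ 2 ∂μ)| ^ α)) μ :=
  stmt9_general μ X X' X'' hindep hid' α t₀ hα ht₀ hexp
end
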